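/- arXiv:2501.05103 — 2 statements merged into one kernel-verified Lean document; each statement's English description precedes it below -/
import Mathlib

section
/- Let S ∈ ℝ³ be a fixed vector. The vector field B(x) = ((x·S)/‖x‖⁴) x on ℝ³∖{0} satisfies, at every x ≠ 0, curl B(x) = −(x×S)/‖x‖⁴. -/
noncomputable section

open scoped BigOperators

/-- Euclidean norm on `ℝ³` (modeled as `Fin 3 → ℝ`). -/
def enorm3 (x : Fin 3 → ℝ) : ℝ := Real.sqrt (∑ i, x i ^ 2)

/-- The Levi-Civita symbol on three indices. -/
def levi (i j k : Fin 3) : ℝ :=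
  if (i = 0 ∧ j = 1 ∧ k = 2) ∨ (i = 1 ∧ j = 2 ∧ k = 0) ∨ (i = 2 ∧ j = 0 ∧ k = 1) then 1
  else if (i = 2 ∧ j = 1 ∧ k = 0) ∨ (i = 0 ∧ j = 2 ∧ k = 1) ∨ (i = 1 ∧ j = 0 ∧ k = 2) then -1
  else 0

/-- Partial derivative `∂ⱼ f` at a point. -/
def pderiv3 (f : (Fin 3 → ℝ) → ℝ) (j : Fin 3) (x : Fin 3 → ℝ) : ℝ :=
  fderiv ℝ f x (Pi.single j 1)

/-- Divergence of a vector field, `div F = Σᵢ ∂ᵢ Fᵢ`. -/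
def div3 (F : (Fin 3 → ℝ) → (Fin 3 → ℝ)) (x : Fin 3 → ℝ) : ℝ :=
  ∑ i, pderiv3 (fun y => F y i) i x

/-- Curl of a vector field, `(curl F)ᵢ = Σⱼₖ εᵢⱼₖ ∂ⱼ Fₖ`. -/
def curl3 (F : (Fin 3 → ℝ) → (Fin 3 → ℝ)) (x : Fin 3 → ℝ) (i : Fin 3) : ℝ :=
  ∑ j, ∑ k, levi i j k * pderiv3 (fun y => F y k) j x

/-- Dot product on `ℝ³`. -/
def dot3 (x y : Fin 3 → ℝ) : ℝ := ∑ i, x i * y i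

/-- Cross product on `ℝ³`, `(x × y)ᵢ = Σⱼₖ εᵢⱼₖ xⱼ yₖ`. -/
def cross3 (x y : Fin 3 → ℝ) (i : Fin 3) : ℝ := ∑ j, ∑ k, levi i j k * x j * y k

lemma Qpos (x : Fin 3 → ℝ) (hx : x ≠ 0) : 0 < ∑ i, x i ^ 2 := by
  obtain ⟨i, hi⟩ := Function.ne_iff.mp hx
  exact Finset.sum_pos' (fun j _ => sq_nonneg _) ⟨i, Finset.mem_univ i, pow_pos (abs_pos.mpr hi) 2 |>.trans_le (by rw [← abs_pow, abs_of_nonneg (sq_nonneg _)])⟩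

lemma enorm4 (y : Fin 3 → ℝ) : enorm3 y ^ 4 = (∑ i, y i ^ 2) ^ 2 := by
  have h : (0:ℝ) ≤ ∑ i, y i ^ 2 := Finset.sum_nonneg fun i _ => sq_nonneg _
  rw [enorm3, show (4:ℕ) = 2*2 from rfl, pow_mul, Real.sq_sqrt h]

lemma key (S x : Fin 3 → ℝ) (hx : x ≠ 0) (j k : Fin 3) :
    pderiv3 (fun y => dot3 y S / enorm3 y ^ 4 * y k) j x =
      (S j * x k + (if j = k then dot3 x S else 0)) / (∑ i, x i ^ 2) ^ 2
      - dot3 x S * x k * (4 * x j) / (∑ i, x i ^ 2) ^ 3 := by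
  have hQ : (0:ℝ) < ∑ i, x i ^ 2 := Qpos x hx
  set P : (i : Fin 3) → (Fin 3 → ℝ) →L[ℝ] ℝ := fun i => ContinuousLinearMap.proj i with hP
  have hdot : HasFDerivAt (fun y => dot3 y S) (∑ i, S i • P i) x := by
    have : (fun y => dot3 y S) = fun y => (∑ i, S i • P i) y := by
      funext y
      simp [dot3, ContinuousLinearMap.sum_apply, ContinuousLinearMap.smul_apply, hP,
        ContinuousLinearMap.proj_apply, mul_comm]
    rw [this]
    exact (∑ i, S i • P i).hasFDerivAt
  have hproj : HasFDerivAt (fun y : Fin 3 → ℝ => y k) (P k) x := (P k).hasFDerivAt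
  have hQd : HasFDerivAt (fun y : Fin 3 → ℝ => ∑ i, y i ^ 2) (∑ i, (2 * x i) • P i) x := by
    apply HasFDerivAt.fun_sum
    intro i _
    have h2 : (fun y : Fin 3 → ℝ => y i ^ 2) = fun y => y i * y i := by
      funext y; ring
    rw [h2, two_mul, add_smul]
    exact ((P i).hasFDerivAt (x := x)).mul ((P i).hasFDerivAt (x := x))
  have hN := hdot.fun_mul hproj
  have hD := hQd.fun_mul hQd
  have hDx : ((∑ i, x i ^ 2) * (∑ i, x i ^ 2) : ℝ) ≠ 0 := by positivity
  have hInv := (hasFDerivAt_inv hDx).comp x hD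
  have hB := hN.fun_mul hInv
  have hfun : (fun y => dot3 y S / enorm3 y ^ 4 * y k)
      = fun y => dot3 y S * y k * ((∑ i, y i ^ 2) * (∑ i, y i ^ 2))⁻¹ := by
    funext y; rw [enorm4, pow_two]; ring
  simp only [Function.comp_def] at hB
  rw [pderiv3, hfun, hB.fderiv]
  simp only [ContinuousLinearMap.comp_apply, ContinuousLinearMap.smulRight_apply,
    ContinuousLinearMap.one_apply, ContinuousLinearMap.smul_apply, ContinuousLinearMap.sub_apply,
    ContinuousLinearMap.add_apply, ContinuousLinearMap.sum_apply, hP,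
    ContinuousLinearMap.proj_apply, smul_eq_mul, Pi.single_apply, ContinuousLinearMap.toSpanSingleton_apply,
    Finset.sum_ite_eq', Finset.mem_univ, if_true, mul_ite, mul_one, mul_zero]
  rw [Fin.sum_univ_three] at hQ ⊢
  have hQ3 : (x 0 ^ 2 + x 1 ^ 2 + x 2 ^ 2 : ℝ) ≠ 0 := ne_of_gt hQ
  rcases eq_or_ne j k with h | h
  · subst h; simp only [if_pos rfl]; field_simp; ring
  · simp only [if_neg h, if_neg (Ne.symm h), add_zero, zero_add]; field_simp; ring

lemma key' (S x : Fin 3 → ℝ) (hx : x ≠ 0) (j k : Fin 3) :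
    pderiv3 (fun y => dot3 y S * y k / (y 0 ^ 2 + y 1 ^ 2 + y 2 ^ 2) ^ 2) j x
      = (S j * x k + (if j = k then dot3 x S else 0)) / (x 0 ^ 2 + x 1 ^ 2 + x 2 ^ 2) ^ 2
        - dot3 x S * x k * (4 * x j) / (x 0 ^ 2 + x 1 ^ 2 + x 2 ^ 2) ^ 3 := by
  have h := key S x hx j k
  have hf : (fun y => dot3 y S / enorm3 y ^ 4 * y k)
      = (fun y => dot3 y S * y k / (y 0 ^ 2 + y 1 ^ 2 + y 2 ^ 2) ^ 2) := by
    funext y; rw [enorm4, Fin.sum_univ_three]; ring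
  rw [hf] at h
  simpa [Fin.sum_univ_three] using h

/-- For a fixed vector `S ∈ ℝ³`, the vector field `B(x) = ((x·S)/‖x‖⁴) x` on `ℝ³∖{0}`
satisfies `curl B(x) = -(x×S)/‖x‖⁴` at every `x ≠ 0`. -/
theorem curl_of_spin_magnetic_field (S : Fin 3 → ℝ) (x : Fin 3 → ℝ) (hx : x ≠ 0) :
    ∀ i, curl3 (fun y j => dot3 y S / enorm3 y ^ 4 * y j) x i
      = -(cross3 x S i) / enorm3 x ^ 4 := by
  intro i
  have hQ : (0:ℝ) < x 0 ^ 2 + x 1 ^ 2 + x 2 ^ 2 := by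
    simpa [Fin.sum_univ_three] using Qpos x hx
  have hQ3 : (x 0 ^ 2 + x 1 ^ 2 + x 2 ^ 2 : ℝ) ≠ 0 := ne_of_gt hQ
  simp only [curl3, cross3, Fin.sum_univ_three]
  simp only [key S x hx]
  fin_cases i <;>
    norm_num [levi, Fin.ext_iff, Fin.sum_univ_three, enorm4] <;>
    field_simp <;> ring

end
end

section
/- Let τ < 0 be a real number and s > 0 a real number. If μ > 0 satisfies μ − 1/μ = −2s/τ, then μ = s/|τ| + √(s²/τ² + 1) and (μ² − 1)/(μ² + 1) = 1/√(1 + τ²/s²). Consequently, the bound-state energy E = Mc²·(μ²−1)/(μ²+1) of the relativistic hydrogen-like atom equals Mc²/√(1 + τ²/(N+ν)²) when s = N + ν. -/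
/-- Dirac hydrogen-like bound states: if `τ < 0`, `s > 0` and `μ > 0` satisfies
`μ − 1/μ = −2s/τ`, then `μ = s/|τ| + √(s²/τ² + 1)` and
`(μ² − 1)/(μ² + 1) = 1/√(1 + τ²/s²)`; consequently, with `s = N + ν`, the bound-state
energy `E = Mc²(μ²−1)/(μ²+1)` equals `Mc²/√(1 + τ²/(N+ν)²)`. -/
theorem dirac_bound_state_energy (τ s μ : ℝ) (hτ : τ < 0) (hs : 0 < s) (hμ : 0 < μ)
    (h : μ - 1 / μ = -2 * s / τ) :
    μ = s / |τ| + Real.sqrt (s ^ 2 / τ ^ 2 + 1) ∧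
    (μ ^ 2 - 1) / (μ ^ 2 + 1) = 1 / Real.sqrt (1 + τ ^ 2 / s ^ 2) ∧
    ∀ (M c : ℝ) (N : ℕ) (ν : ℝ), s = (N : ℝ) + ν →
      M * c ^ 2 * ((μ ^ 2 - 1) / (μ ^ 2 + 1))
        = M * c ^ 2 / Real.sqrt (1 + τ ^ 2 / ((N : ℝ) + ν) ^ 2) := by
  have hτ0 : τ ≠ 0 := ne_of_lt hτ
  have habs : |τ| = -τ := abs_of_neg hτ
  set A : ℝ := s / |τ| with hA
  have hApos : 0 < A := div_pos hs (abs_pos.mpr hτ0)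
  have hA2 : A ^ 2 = s ^ 2 / τ ^ 2 := by
    rw [hA, div_pow, sq_abs]
  -- quadratic relation: μ² = 2Aμ + 1
  have hquad : μ ^ 2 = 2 * A * μ + 1 := by
    have h' : μ - 1 / μ = 2 * A := by
      rw [h, hA, habs]
      field_simp
    have := hμ.ne'
    field_simp at h'
    nlinarith [h']
  -- μ - A is positive
  have hμA : 0 < μ - A := by
    nlinarith [sq_nonneg μ, sq_nonneg (μ - A)]
  have hr2 : (μ - A) ^ 2 = A ^ 2 + 1 := by nlinarith
  set r : ℝ := Real.sqrt (A ^ 2 + 1) with hrdef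
  have hrpos : 0 < r := Real.sqrt_pos.mpr (by positivity)
  have hμeq : μ = A + r := by
    have : μ - A = r := by
      rw [hrdef, ← hr2, Real.sqrt_sq hμA.le]
    linarith
  have hr2' : r ^ 2 = A ^ 2 + 1 := Real.sq_sqrt (by positivity)
  have hsqrt : Real.sqrt (1 + τ ^ 2 / s ^ 2) = r / A := by
    have h1 : 1 + τ ^ 2 / s ^ 2 = (r / A) ^ 2 := by
      have hAe : A ^ 2 = s ^ 2 / τ ^ 2 := hA2
      field_simp
      field_simp at hAe
      nlinarith [hr2', sq_nonneg τ, sq_nonneg s]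
    rw [h1, Real.sqrt_sq (by positivity)]
  have hratio : (μ ^ 2 - 1) / (μ ^ 2 + 1) = 1 / Real.sqrt (1 + τ ^ 2 / s ^ 2) := by
    rw [hsqrt, hμeq, one_div_div]
    have hnum : (A + r) ^ 2 - 1 = 2 * A * (A + r) := by nlinarith
    have hden : (A + r) ^ 2 + 1 = 2 * r * (A + r) := by nlinarith
    rw [hnum, hden]
    have hAr : (0:ℝ) < A + r := by positivity
    rw [div_eq_div_iff (by positivity) hrpos.ne']
    ring
  refine ⟨?_, hratio, ?_⟩
  · rw [hμeq, hrdef, hA2]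
  · intro M c N ν hsN
    rw [hratio, ← hsN, mul_one_div]
end
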